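/- Let α be any real number, let L = (l_1, l_2, …, l_s) be a length vector with s ≥ 2 and l_1 ≥ 3, and let L' = (2,2,…,2, l_2, …, l_s) be the length vector obtained by replacing the first entry l_1 by l_1 − 1 copies of 2. Then n(L') = n(L) and Ψ_α(L') − Ψ_α(L) = g(α) + (l_1 − 2)·(f(α) + h(α)). In particular, if α < 0 then Ψ_α(L') < Ψ_α(L). (This is the key transformation used in the proof of Proposition 2 to show that a minimizer has all external segments of length 2.) -/

import Mathlib

/-!
Write `T = M ++ [b]`. Both `l₁ :: T` and `2 :: (2, …, 2, M, b)` have the shape `a :: (M' ++ [b])`,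
whose weight is determined by its length, by whether `a` and `b` equal 2, and by the number of 2s
in `M'`. The replacement makes the first entry a 2 and adds `l₁ − 2` entries, all of them internal
2s, which gives the difference `g + (l₁ − 2)(f + h)`.

For `α < 0`, `f(α) + h(α) = 8^α − 6^α < 0`, and `g(α) < 0` because `35^α > 36^α`, which by
AM–GM gives `5^α + 7^α > 2·6^α`.
-/

noncomputable def f (α : ℝ) : ℝ := 2 * (5:ℝ) ^ α - 6 * (6:ℝ) ^ α + 4 * (7:ℝ) ^ α
noncomputable def g (α : ℝ) : ℝ := 2 * (6:ℝ) ^ α - (5:ℝ) ^ α - (7:ℝ) ^ α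
noncomputable def h (α : ℝ) : ℝ := 5 * (6:ℝ) ^ α - 2 * (5:ℝ) ^ α - 4 * (7:ℝ) ^ α + (8:ℝ) ^ α

/-- A length vector: a nonempty list of segment lengths, each at least 2. -/
def LengthVector (L : List ℕ) : Prop := L ≠ [] ∧ ∀ l ∈ L, 2 ≤ l

/-- Square count of a length vector: `l₁ + ⋯ + l_s − (s − 1)`. -/
def nSq (L : List ℕ) : ℕ := L.sum - (L.length - 1)

/-- Number of external (first or last) entries equal to 2. -/
def e2 (L : List ℕ) : ℕ :=
  ((Finset.range L.length).filter
    (fun j => (j = 0 ∨ j = L.length - 1) ∧ L.getD j 0 = 2)).card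

/-- Number of internal entries (neither first nor last) equal to 2. -/
def i2 (L : List ℕ) : ℕ :=
  ((Finset.range L.length).filter
    (fun j => j ≠ 0 ∧ j ≠ L.length - 1 ∧ L.getD j 0 = 2)).card

/-- The weight Ψ_α(L) = f(α)·s + g(α)·e₂(L) + h(α)·i₂(L). -/
noncomputable def psi (α : ℝ) (L : List ℕ) : ℝ :=
  f α * L.length + g α * e2 L + h α * i2 L

lemma card_filter_range_getD_eq_count {α : Type*} [DecidableEq α] (L : List α) (c d : α) :
    ((Finset.range L.length).filter fun j => L.getD j d = c).card = L.count c := by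
  induction L with
  | nil => simp
  | cons a L ih =>
    rw [Finset.card_filter] at ih ⊢
    rw [List.length_cons, Finset.sum_range_succ', List.count_cons]
    simp only [List.getD_cons_succ, List.getD_cons_zero, ih, beq_iff_eq]

lemma getD_cons_append_singleton_succ {α : Type*} (a b d : α) (M : List α) {j : ℕ}
    (hj : j < M.length) : (a :: (M ++ [b])).getD (j + 1) d = M.getD j d := by
  rw [List.getD_cons_succ, List.getD_append _ _ _ _ hj]

lemma i2_cons_append_singleton (a b : ℕ) (M : List ℕ) : i2 (a :: (M ++ [b])) = M.count 2 := by
  rw [← card_filter_range_getD_eq_count M 2 0, i2, Finset.card_filter, Finset.card_filter,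
    List.length_cons, List.length_append, List.length_singleton, Finset.sum_range_succ,
    Finset.sum_range_succ']
  have hmid : ∀ j ∈ Finset.range M.length,
      (if j + 1 ≠ 0 ∧ j + 1 ≠ M.length + 1 + 1 - 1 ∧ (a :: (M ++ [b])).getD (j + 1) 0 = 2
        then 1 else 0) = if M.getD j 0 = 2 then 1 else 0 := by
    intro j hj
    rw [Finset.mem_range] at hj
    have hlast : j + 1 ≠ M.length + 1 + 1 - 1 := by omega
    rw [getD_cons_append_singleton_succ a b 0 M hj]
    exact if_congr ⟨fun h => h.2.2, fun h => ⟨j.succ_ne_zero, hlast, h⟩⟩ rfl rfl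
  rw [Finset.sum_congr rfl hmid]
  simp

lemma e2_cons_append_singleton (a b : ℕ) (M : List ℕ) :
    e2 (a :: (M ++ [b])) = (if a = 2 then 1 else 0) + (if b = 2 then 1 else 0) := by
  rw [e2, Finset.card_filter, List.length_cons, List.length_append, List.length_singleton,
    Finset.sum_range_succ, Finset.sum_range_succ']
  have hmid : ∀ j ∈ Finset.range M.length,
      (if (j + 1 = 0 ∨ j + 1 = M.length + 1 + 1 - 1) ∧ (a :: (M ++ [b])).getD (j + 1) 0 = 2
        then 1 else 0) = 0 := by
    intro j hj
    rw [Finset.mem_range] at hj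
    exact if_neg (by omega)
  rw [Finset.sum_congr rfl hmid]
  simp

lemma nSq_replicate_two_append {l : ℕ} (hl : 2 ≤ l) (T : List ℕ) :
    nSq (List.replicate (l - 1) 2 ++ T) = nSq (l :: T) := by
  simp only [nSq, List.sum_append, List.sum_replicate, smul_eq_mul, List.length_append,
    List.length_replicate, List.sum_cons, List.length_cons]
  omega

lemma psi_cons_append_singleton (α : ℝ) (a b : ℕ) (M : List ℕ) :
    psi α (a :: (M ++ [b])) = f α * (M.length + 2) +
      g α * ((if a = 2 then 1 else 0) + (if b = 2 then 1 else 0)) + h α * M.count 2 := by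
  rw [psi, e2_cons_append_singleton, i2_cons_append_singleton, List.length_cons,
    List.length_append, List.length_singleton]
  push_cast
  ring

lemma psi_replicate_two_append_sub_psi_cons (α : ℝ) {l : ℕ} (hl : 3 ≤ l) {T : List ℕ}
    (hT : T ≠ []) :
    psi α (List.replicate (l - 1) 2 ++ T) - psi α (l :: T) = g α + ((l : ℝ) - 2) * (f α + h α) := by
  obtain ⟨M, b, rfl⟩ := (List.eq_nil_or_concat' T).resolve_left hT
  obtain ⟨m, rfl⟩ : ∃ m, l = m + 3 := ⟨l - 3, by omega⟩
  have hsplit : List.replicate (m + 3 - 1) 2 ++ (M ++ [b])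
      = 2 :: ((List.replicate (m + 1) 2 ++ M) ++ [b]) := by
    simp [List.replicate_succ]
  rw [hsplit, psi_cons_append_singleton, psi_cons_append_singleton, if_pos rfl,
    if_neg (by omega : m + 3 ≠ 2), List.count_append, List.count_replicate_self,
    List.length_append, List.length_replicate]
  push_cast
  ring

lemma two_mul_rpow_lt_rpow_add_rpow {a b c α : ℝ} (ha : 0 < a) (hb : 0 < b) (hc : 0 ≤ c)
    (habc : a * b < c * c) (hα : α < 0) : 2 * c ^ α < a ^ α + b ^ α := by
  have hgm : c ^ α * c ^ α < a ^ α * b ^ α := by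
    rw [← Real.mul_rpow hc hc, ← Real.mul_rpow ha.le hb.le]
    exact Real.rpow_lt_rpow_of_neg (by positivity) habc hα
  have hsq : (2 * c ^ α) ^ 2 < (a ^ α + b ^ α) ^ 2 := by
    nlinarith [sq_nonneg (a ^ α - b ^ α)]
  exact lt_of_pow_lt_pow_left₀ 2 (by positivity) hsq

lemma g_neg {α : ℝ} (hα : α < 0) : g α < 0 := by
  have := two_mul_rpow_lt_rpow_add_rpow (c := 6) (by norm_num : (0:ℝ) < 5)
    (by norm_num : (0:ℝ) < 7) (by norm_num) (by norm_num) hα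
  unfold g
  linarith

lemma f_add_h_neg {α : ℝ} (hα : α < 0) : f α + h α < 0 := by
  have h86 : (8:ℝ) ^ α < (6:ℝ) ^ α := Real.rpow_lt_rpow_of_neg (by norm_num) (by norm_num) hα
  unfold f h
  linarith

theorem psi_replace_first_general (α : ℝ) (l1 : ℕ) (hl1 : 3 ≤ l1)
    (T : List ℕ) (hT : T ≠ []) :
    nSq (List.replicate (l1 - 1) 2 ++ T) = nSq (l1 :: T) ∧
    psi α (List.replicate (l1 - 1) 2 ++ T) - psi α (l1 :: T) =
      g α + ((l1 : ℝ) - 2) * (f α + h α) ∧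
    (α < 0 → psi α (List.replicate (l1 - 1) 2 ++ T) < psi α (l1 :: T)) := by
  have hdiff := psi_replicate_two_append_sub_psi_cons α hl1 hT
  refine ⟨nSq_replicate_two_append (by omega) T, hdiff, fun hα => ?_⟩
  have hl1' : (0:ℝ) ≤ (l1 : ℝ) - 2 := by
    rw [sub_nonneg]; exact_mod_cast (by omega : 2 ≤ l1)
  have hlin : ((l1 : ℝ) - 2) * (f α + h α) ≤ 0 :=
    mul_nonpos_of_nonneg_of_nonpos hl1' (f_add_h_neg hα).le
  linarith [g_neg hα]

/-- The transformation replacing a first entry l₁ ≥ 3 by l₁ − 1 copies of 2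
preserves the square count and changes Ψ_α by g(α) + (l₁−2)(f(α)+h(α)); in
particular it strictly decreases Ψ_α when α < 0. -/
theorem psi_replace_first (α : ℝ) (l1 : ℕ) (hl1 : 3 ≤ l1)
    (T : List ℕ) (hT : T ≠ []) (hT2 : ∀ l ∈ T, 2 ≤ l) :
    nSq (List.replicate (l1 - 1) 2 ++ T) = nSq (l1 :: T) ∧
    psi α (List.replicate (l1 - 1) 2 ++ T) - psi α (l1 :: T) =
      g α + ((l1 : ℝ) - 2) * (f α + h α) ∧
    (α < 0 → psi α (List.replicate (l1 - 1) 2 ++ T) < psi α (l1 :: T)) :=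
  psi_replace_first_general α l1 hl1 T hT
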